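/- For every finite set W ⊆ ℤ with |W| = k ≥ 1 and every integer n ≥ 1, there exists an (n,W)-universal graph of size at most n^k. -/

import Mathlib

/-!
Let `A` be the set of integers `∑_{w ∈ W} c_w w` with `0 ≤ c_w < n`; it has at most `n^k`
elements. The `W`-linear graph on `A` satisfies mean payoff, because along an infinite path the
partial weight sums dominate the telescoping differences of the visited vertices, which are
bounded. Conversely, in a graph satisfying mean payoff every cycle has nonnegative weight
(traverse it forever), so cycles can be cut out of paths: the distance `φ v` from the initial
vertex exists and is the weight of a path with fewer than `n` edges, hence lies in `A`, and the
triangle inequality `φ v' ≤ φ v + w` along each edge `(v, w, v')` makes `φ` a homomorphism into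
the linear graph on `A`.
-/

open Filter


/-- A finite path: a list of consecutive edges, all belonging to `E`,
starting at `u` (when nonempty). -/
def FinPath {V : Type} (E : Set (V × ℤ × V)) (u : V) (p : List (V × ℤ × V)) : Prop :=
  (∀ e ∈ p, e ∈ E) ∧ List.Chain' (fun e e' => e.2.2 = e'.1) p ∧
    ∀ h : p ≠ [], (p.head h).1 = u

/-- The last vertex of a finite path starting at `u` (which is `u` itself for the empty path). -/
def lastV {V : Type} (u : V) (p : List (V × ℤ × V)) : V :=
  (p.getLastD (u, 0, u)).2.2

/-- An infinite path: a sequence of consecutive edges, all belonging to `E`. -/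
def InfPath {V : Type} (E : Set (V × ℤ × V)) (π : ℕ → V × ℤ × V) : Prop :=
  (∀ i, π i ∈ E) ∧ ∀ i, (π i).2.2 = (π (i + 1)).1

/-- The total weight of a finite path. -/
def pathWeight {V : Type} (p : List (V × ℤ × V)) : ℤ :=
  (p.map fun e => e.2.1).sum

/-- A sequence of integer weights satisfies mean payoff if the liminf of the
averages of its prefixes is nonnegative. -/
def MeanPayoffSeq (w : ℕ → ℤ) : Prop :=
  0 ≤ Filter.atTop.liminf (fun ℓ : ℕ => (∑ i ∈ Finset.range ℓ, (w i : ℝ)) / (ℓ : ℝ))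

/-- A graph (given by its edge set) satisfies mean payoff if all its infinite paths do. -/
def SatMP {V : Type} (E : Set (V × ℤ × V)) : Prop :=
  ∀ π : ℕ → V × ℤ × V, InfPath E π → MeanPayoffSeq (fun i => (π i).2.1)

/-- A cycle: a nonempty finite path whose first and last vertices coincide. -/
def IsCycle {V : Type} (E : Set (V × ℤ × V)) (p : List (V × ℤ × V)) : Prop :=
  p ≠ [] ∧ ∃ v, FinPath E v p ∧ lastV v p = v

/-- A `W`-graph: a finite set of vertices, edges labelled by weights in `W`,
and an initial vertex from which every vertex is reachable. -/
structure WGraph (W : Finset ℤ) where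
  V : Type
  fin : Fintype V
  E : Set (V × ℤ × V)
  init : V
  wt : ∀ e ∈ E, e.2.1 ∈ W
  reach : ∀ v : V, ∃ p, FinPath E init p ∧ lastV init p = v

attribute [instance] WGraph.fin

/-- The `W`-linear graph on a set `A ⊆ ℤ`: vertices are the elements of `A`, and
for `v, v' ∈ A` and `w ∈ W` there is an edge `(v, w, v')` whenever `v' - v ≤ w`. -/
def LinE (W : Finset ℤ) (A : Set ℤ) : Set (ℤ × ℤ × ℤ) :=
  {e | e.1 ∈ A ∧ e.2.2 ∈ A ∧ e.2.1 ∈ W ∧ e.2.2 - e.1 ≤ e.2.1}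

/-- A homomorphism of labelled graphs (no requirement on initial vertices). -/
def IsHom {V U : Type} (E : Set (V × ℤ × V)) (E' : Set (U × ℤ × U)) (φ : V → U) : Prop :=
  ∀ e ∈ E, (φ e.1, e.2.1, φ e.2.2) ∈ E'

/-- A graph (given by its edge set) is `(n,W)`-universal if it satisfies mean payoff and
every `(n,W)`-graph satisfying mean payoff admits a homomorphism into it. -/
def Universal (n : ℕ) (W : Finset ℤ) {U : Type} (EU : Set (U × ℤ × U)) : Prop :=
  SatMP EU ∧
    ∀ G : WGraph W, Fintype.card G.V ≤ n → SatMP G.E → ∃ φ : G.V → U, IsHom G.E EU φ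

/-- The set of weights `(-N, N)`: integers `w` with `-N < w < N`. -/
noncomputable def Wball (N : ℕ) : Finset ℤ := Finset.Ioo (-(N : ℤ)) (N : ℤ)

/-- `φ` is the distance function from the initial vertex: `φ v` is the minimum total
weight of a finite path from the initial vertex to `v`. -/
def IsDistFrom {W : Finset ℤ} (G : WGraph W) (φ : G.V → ℤ) : Prop :=
  ∀ v : G.V,
    (∃ p, FinPath G.E G.init p ∧ lastV G.init p = v ∧ pathWeight p = φ v) ∧
    ∀ p, FinPath G.E G.init p → lastV G.init p = v → φ v ≤ pathWeight p

noncomputable def prefixMean (w : ℕ → ℤ) (ℓ : ℕ) : ℝ :=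
  (∑ i ∈ Finset.range ℓ, (w i : ℝ)) / ℓ

lemma prefixMean_le {w : ℕ → ℤ} {d : ℤ} (hd : ∀ i, w i ≤ d) (ℓ : ℕ) :
    prefixMean w ℓ ≤ max d 0 := by
  rcases Nat.eq_zero_or_pos ℓ with rfl | hℓ
  · simp [prefixMean]
  have hsum : ∑ i ∈ Finset.range ℓ, (w i : ℝ) ≤ ℓ * d := by
    simpa using Finset.sum_le_card_nsmul (Finset.range ℓ) _ (d : ℝ) fun i _ =>
      Int.cast_le.mpr (hd i)
  have hd0 : (d : ℝ) ≤ max d 0 := by exact_mod_cast le_max_left d 0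
  rw [prefixMean, div_le_iff₀ (by exact_mod_cast hℓ)]
  nlinarith [(Nat.cast_pos (α := ℝ)).mpr hℓ]

lemma le_prefixMean {w : ℕ → ℤ} {c : ℤ} (hc : ∀ i, c ≤ w i) (ℓ : ℕ) :
    ((min c 0 : ℤ) : ℝ) ≤ prefixMean w ℓ := by
  rcases Nat.eq_zero_or_pos ℓ with rfl | hℓ
  · simp [prefixMean]
  have hsum : ℓ * c ≤ ∑ i ∈ Finset.range ℓ, (w i : ℝ) := by
    simpa using Finset.card_nsmul_le_sum (Finset.range ℓ) _ (c : ℝ) fun i _ =>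
      Int.cast_le.mpr (hc i)
  have hc0 : ((min c 0 : ℤ) : ℝ) ≤ c := by exact_mod_cast min_le_left c 0
  rw [prefixMean, le_div_iff₀ (by exact_mod_cast hℓ)]
  nlinarith [(Nat.cast_pos (α := ℝ)).mpr hℓ]

lemma meanPayoffSeq_of_le_sum_range {w : ℕ → ℤ} {d C : ℤ} (hd : ∀ i, w i ≤ d)
    (hC : ∀ ℓ, C ≤ ∑ i ∈ Finset.range ℓ, w i) : MeanPayoffSeq w := by
  have hlim : Tendsto (fun ℓ : ℕ => (C : ℝ) / ℓ) atTop (nhds 0) :=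
    tendsto_const_div_atTop_nhds_zero_nat _
  show 0 ≤ atTop.liminf (prefixMean w)
  rw [← hlim.liminf_eq]
  refine liminf_le_liminf (Eventually.of_forall fun ℓ => ?_) hlim.isBoundedUnder_ge
    (isBoundedUnder_of ⟨_, prefixMean_le hd⟩).isCoboundedUnder_ge
  exact div_le_div_of_nonneg_right (by exact_mod_cast hC ℓ) ℓ.cast_nonneg

lemma Function.Periodic.sum_range_mul {M : Type*} [AddCommMonoid M] {f : ℕ → M} {m : ℕ}
    (hf : Function.Periodic f m) (q : ℕ) :
    ∑ i ∈ Finset.range (q * m), f i = q • ∑ i ∈ Finset.range m, f i := by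
  induction q with
  | zero => simp
  | succ q ih =>
    rw [add_mul, one_mul, Finset.sum_range_add, ih, succ_nsmul]
    congr 1
    refine Finset.sum_congr rfl fun i _ => ?_
    rw [add_comm]
    exact hf.nat_mul q i

lemma Function.Periodic.bddBelow_range {α : Type*} [SemilatticeInf α] [Nonempty α]
    {f : ℕ → α} {m : ℕ} (hf : Function.Periodic f m) (hm : 0 < m) :
    BddBelow (Set.range f) := by
  classical
  obtain ⟨c, hc⟩ := ((Finset.range m).image f).bddBelow
  refine ⟨c, ?_⟩
  rintro _ ⟨i, rfl⟩
  have hi := hf.nat_mul (i / m) (i % m)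
  rw [Nat.cast_id, Nat.mod_add_div'] at hi
  rw [hi]
  exact hc (Finset.mem_coe.mpr (Finset.mem_image_of_mem f
    (Finset.mem_range.mpr (Nat.mod_lt i hm))))

lemma MeanPayoffSeq.sum_range_nonneg_of_periodic {w : ℕ → ℤ} (hw : MeanPayoffSeq w) {m : ℕ}
    (hper : Function.Periodic w m) (hm : 0 < m) : 0 ≤ ∑ i ∈ Finset.range m, w i := by
  -- `liminf` on `ℝ` is a junk value for sequences unbounded below, so the prefix means
  -- must be bounded below before `liminf_le_of_frequently_le` says anything.
  obtain ⟨c, hc⟩ := hper.bddBelow_range hm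
  have hmean : ∀ q, 0 < q →
      prefixMean w (q * m) = (∑ i ∈ Finset.range m, w i : ℤ) / m := by
    intro q hq
    rw [prefixMean, ← Int.cast_sum, hper.sum_range_mul, nsmul_eq_mul, Int.cast_mul,
      Int.cast_natCast, Nat.cast_mul]
    field_simp
  generalize ∑ i ∈ Finset.range m, w i = S at hmean ⊢
  have hfreq : ∃ᶠ ℓ in atTop, prefixMean w ℓ ≤ S / m :=
    frequently_atTop.mpr fun a => ⟨(a + 1) * m, by nlinarith, (hmean _ a.succ_pos).le⟩
  have hS : (0 : ℝ) ≤ S / m :=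
    hw.trans (liminf_le_of_frequently_le hfreq
      (isBoundedUnder_of ⟨_, le_prefixMean fun i => hc ⟨i, rfl⟩⟩))
  by_contra! hneg
  have : (S : ℝ) / m < 0 := div_neg_of_neg_of_pos (by exact_mod_cast hneg) (by positivity)
  linarith

section Paths

variable {V : Type} {E : Set (V × ℤ × V)}

lemma pathWeight_append (p q : List (V × ℤ × V)) :
    pathWeight (p ++ q) = pathWeight p + pathWeight q := by
  simp [pathWeight]

lemma mul_le_pathWeight {c : ℤ} {p : List (V × ℤ × V)} (hc : ∀ e ∈ p, c ≤ e.2.1) :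
    p.length * c ≤ pathWeight p := by
  have hmap : ∀ x ∈ p.map fun e => e.2.1, c ≤ x := by
    simpa only [List.mem_map, forall_exists_index, and_imp, forall_apply_eq_imp_iff₂] using hc
  simpa [pathWeight] using List.card_nsmul_le_sum _ c hmap

lemma lastV_eq_getLast (u : V) {p : List (V × ℤ × V)} (hp : p ≠ []) :
    lastV u p = (p.getLast hp).2.2 := by
  simp [lastV, List.getLastD_eq_getLast?, List.getLast?_eq_some_getLast hp]

lemma lastV_append (u : V) (p q : List (V × ℤ × V)) :
    lastV u (p ++ q) = lastV (lastV u p) q := by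
  rcases eq_or_ne q [] with rfl | hq
  · simp [lastV]
  · rw [lastV_eq_getLast u (List.append_ne_nil_of_right_ne_nil p hq), lastV_eq_getLast _ hq,
      List.getLast_append_of_ne_nil]

lemma finPath_iff {u : V} {p : List (V × ℤ × V)} :
    FinPath E u p ↔ (∀ e ∈ p, e ∈ E) ∧ p.IsChain (fun e e' => e.2.2 = e'.1) ∧
      ∀ h : p ≠ [], (p.head h).1 = u :=
  Iff.rfl

lemma finPath_append {u : V} {p q : List (V × ℤ × V)} :
    FinPath E u (p ++ q) ↔ FinPath E u p ∧ FinPath E (lastV u p) q := by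
  rcases eq_or_ne p [] with rfl | hp
  · simp [finPath_iff, lastV]
  rcases eq_or_ne q [] with rfl | hq
  · simp [finPath_iff]
  simp only [finPath_iff, List.isChain_append, List.mem_append, List.getLast?_eq_some_getLast hp,
    List.head?_eq_some_head hq, Option.mem_some_iff, forall_eq', List.head_append_of_ne_nil hp,
    lastV_eq_getLast u hp, ne_eq, hp, hq, List.append_eq_nil_iff, false_and, not_false_eq_true,
    forall_const, or_imp, forall_and, forall_true_left]
  aesop

lemma exists_eq_append_loop [Fintype V] (u : V) {p : List (V × ℤ × V)}
    (hp : Fintype.card V ≤ p.length) :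
    ∃ a c b, p = a ++ c ++ b ∧ c ≠ [] ∧ lastV u (a ++ c) = lastV u a := by
  obtain ⟨i, j, hij, heq⟩ := Fintype.exists_ne_map_eq_of_card_lt
    (fun i : Fin (p.length + 1) => lastV u (p.take i)) (by simpa using Nat.lt_succ_of_le hp)
  wlog hlt : i < j generalizing i j
  · exact this j i hij.symm heq.symm (lt_of_le_of_ne (not_lt.mp hlt) hij.symm)
  have hprefix : p.take i ++ (p.take j).drop i = p.take j := by
    conv_rhs => rw [← List.take_append_drop i (p.take j)]
    rw [List.take_take, min_eq_left (Fin.le_def.mp hlt.le)]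
  refine ⟨p.take i, (p.take j).drop i, p.drop j, ?_, ?_, ?_⟩
  · rw [hprefix, List.take_append_drop]
  · have := j.isLt
    rw [Fin.lt_def] at hlt
    simp only [ne_eq, List.drop_eq_nil_iff, List.length_take]
    omega
  · rw [hprefix]
    exact heq.symm

lemma SatMP.pathWeight_nonneg_of_isCycle (hMP : SatMP E) {p : List (V × ℤ × V)}
    (hc : IsCycle E p) : 0 ≤ pathWeight p := by
  obtain ⟨hne, v, ⟨hE, hchain, hhead⟩, hlast⟩ := hc
  have hm : 0 < p.length := List.length_pos_iff.mpr hne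
  let π : ℕ → V × ℤ × V := fun i => p[i % p.length]'(Nat.mod_lt i hm)
  have hπ : InfPath E π := by
    refine ⟨fun i => hE _ (List.getElem_mem _), fun i => ?_⟩
    have hi := Nat.mod_lt i hm
    rcases Nat.lt_or_ge (i % p.length + 1) p.length with hlt | hge
    · have hsucc : (i + 1) % p.length = i % p.length + 1 := by
        rw [← Nat.mod_add_mod, Nat.mod_eq_of_lt hlt]
      simp only [π, hsucc]
      exact hchain.getElem _ hlt
    · have hlast_idx : i % p.length = p.length - 1 := by omega
      have hwrap : (i + 1) % p.length = 0 := by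
        rw [← Nat.mod_add_mod, hlast_idx, Nat.sub_add_cancel hm, Nat.mod_self]
      simp only [π, hlast_idx, hwrap]
      rw [← List.getLast_eq_getElem hne, ← lastV_eq_getLast v hne, hlast,
        ← List.head_eq_getElem hne, hhead hne]
  have hper : Function.Periodic (fun i => (π i).2.1) p.length := fun i => by
    simp only [π, Nat.add_mod_right]
  have hsum : ∑ i ∈ Finset.range p.length, (π i).2.1 = pathWeight p := by
    rw [Finset.sum_range, pathWeight, ← Fin.sum_univ_fun_getElem]
    refine Finset.sum_congr rfl fun i _ => ?_
    simp only [π, Nat.mod_eq_of_lt i.isLt]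
  rw [← hsum]
  exact (hMP π hπ).sum_range_nonneg_of_periodic hper hm

lemma SatMP.exists_short_path [Fintype V] (hMP : SatMP E) {u : V} {p : List (V × ℤ × V)}
    (hp : FinPath E u p) :
    ∃ q, FinPath E u q ∧ lastV u q = lastV u p ∧ pathWeight q ≤ pathWeight p ∧
      q.length < Fintype.card V := by
  induction hlen : p.length using Nat.strong_induction_on generalizing p with
  | _ L ih =>
  by_cases hshort : p.length < Fintype.card V
  · exact ⟨p, hp, rfl, le_rfl, hshort⟩
  obtain ⟨a, c, b, rfl, hc, hloop⟩ := exists_eq_append_loop u (not_lt.mp hshort)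
  obtain ⟨⟨ha, hc'⟩, hb⟩ := finPath_append.mp hp |>.imp_left finPath_append.mp
  have hcycle : IsCycle E c := ⟨hc, _, hc', by rw [← lastV_append, hloop]⟩
  have hab : FinPath E u (a ++ b) := finPath_append.mpr ⟨ha, hloop ▸ hb⟩
  have hshorter : (a ++ b).length < L := by
    rw [← hlen]
    simpa using List.length_pos_iff.mpr hc
  obtain ⟨q, hq, hql, hqw, hqlen⟩ := ih _ hshorter hab rfl
  refine ⟨q, hq, by rw [hql, lastV_append, lastV_append u (a ++ c), hloop], ?_, hqlen⟩
  have := hMP.pathWeight_nonneg_of_isCycle hcycle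
  simp only [pathWeight_append] at hqw ⊢
  linarith

end Paths

lemma SatMP.of_isHom {V U : Type} {E : Set (V × ℤ × V)} {E' : Set (U × ℤ × U)}
    {φ : V → U} (hφ : IsHom E E' φ) (hE' : SatMP E') : SatMP E := fun π hπ =>
  hE' (fun i => (φ (π i).1, (π i).2.1, φ (π i).2.2))
    ⟨fun i => hφ _ (hπ.1 i), fun i => by simp only [hπ.2 i]⟩

lemma satMP_linE (W : Finset ℤ) {A : Set ℤ} (hlo : BddBelow A) (hhi : BddAbove A) :
    SatMP (LinE W A) := by
  intro π hπ
  obtain ⟨a, ha⟩ := hlo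
  obtain ⟨b, hb⟩ := hhi
  obtain ⟨d, hd⟩ := W.bddAbove
  have hvtx : ∀ i, (π i).1 ∈ A := fun i => (hπ.1 i).1
  refine meanPayoffSeq_of_le_sum_range (d := d) (C := a - b) (fun i => hd (hπ.1 i).2.2.1)
    fun ℓ => ?_
  calc a - b ≤ (π ℓ).1 - (π 0).1 := sub_le_sub (ha (hvtx ℓ)) (hb (hvtx 0))
    _ = ∑ i ∈ Finset.range ℓ, ((π (i + 1)).1 - (π i).1) :=
      (Finset.sum_range_sub (fun i => (π i).1) ℓ).symm
    _ ≤ ∑ i ∈ Finset.range ℓ, (π i).2.1 :=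
      Finset.sum_le_sum fun i _ => hπ.2 i ▸ (hπ.1 i).2.2.2

section Distance

variable {W : Finset ℤ} (G : WGraph W)

lemma exists_isDistFrom (hMP : SatMP G.E) : ∃ φ, IsDistFrom G φ := by
  classical
  suffices key : ∀ v, ∃ d : ℤ,
      (∃ p, FinPath G.E G.init p ∧ lastV G.init p = v ∧ pathWeight p = d) ∧
      ∀ p, FinPath G.E G.init p → lastV G.init p = v → d ≤ pathWeight p by
    choose φ hφ using key
    exact ⟨φ, hφ⟩
  intro v
  obtain ⟨c, hc⟩ := W.bddBelow
  have hbdd : ∃ b, ∀ z, (∃ p, FinPath G.E G.init p ∧ lastV G.init p = v ∧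
      pathWeight p = z ∧ p.length < Fintype.card G.V) → b ≤ z := by
    refine ⟨Fintype.card G.V * min c 0, ?_⟩
    rintro _ ⟨p, hp, -, rfl, hlen⟩
    calc (Fintype.card G.V : ℤ) * min c 0 ≤ p.length * min c 0 :=
          mul_le_mul_of_nonpos_right (by exact_mod_cast hlen.le) (min_le_right c 0)
      _ ≤ pathWeight p :=
          mul_le_pathWeight fun e he => (min_le_left c 0).trans (hc (G.wt e (hp.1 e he)))
  have hinh : ∃ z, ∃ p, FinPath G.E G.init p ∧ lastV G.init p = v ∧ pathWeight p = z ∧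
      p.length < Fintype.card G.V := by
    obtain ⟨p, hp, hpv⟩ := G.reach v
    obtain ⟨q, hq, hql, -, hqlen⟩ := hMP.exists_short_path hp
    exact ⟨_, q, hq, hql.trans hpv, rfl, hqlen⟩
  obtain ⟨d, ⟨p, hp, hpv, hpd, -⟩, hmin⟩ := Int.exists_least_of_bdd hbdd hinh
  refine ⟨d, ⟨p, hp, hpv, hpd⟩, fun q hq hqv => ?_⟩
  obtain ⟨r, hr, hrl, hrw, hrlen⟩ := hMP.exists_short_path hq
  exact (hmin _ ⟨r, hr, hrl.trans hqv, rfl, hrlen⟩).trans hrw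

variable {G}

lemma IsDistFrom.le_add {φ : G.V → ℤ} (hφ : IsDistFrom G φ) {e : G.V × ℤ × G.V}
    (he : e ∈ G.E) : φ e.2.2 ≤ φ e.1 + e.2.1 := by
  obtain ⟨p, hp, hpv, hpw⟩ := (hφ e.1).1
  have hedge : FinPath G.E e.1 [e] :=
    finPath_iff.mpr ⟨by simpa using he, List.isChain_singleton _, fun _ => rfl⟩
  have hpe : FinPath G.E G.init (p ++ [e]) := finPath_append.mpr ⟨hp, hpv ▸ hedge⟩
  calc φ e.2.2 ≤ pathWeight (p ++ [e]) := (hφ e.2.2).2 _ hpe (by rw [lastV_append]; rfl)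
    _ = φ e.1 + e.2.1 := by simp [← hpw, pathWeight]

lemma IsDistFrom.exists_short_path {φ : G.V → ℤ} (hφ : IsDistFrom G φ) (hMP : SatMP G.E)
    (v : G.V) : ∃ p, FinPath G.E G.init p ∧ lastV G.init p = v ∧ pathWeight p = φ v ∧
      p.length < Fintype.card G.V := by
  obtain ⟨p, hp, hpv, hpw⟩ := (hφ v).1
  obtain ⟨q, hq, hql, hqw, hqlen⟩ := hMP.exists_short_path hp
  have hqv : lastV G.init q = v := hql.trans hpv
  exact ⟨q, hq, hqv, le_antisymm (hpw ▸ hqw) ((hφ v).2 q hq hqv), hqlen⟩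

end Distance

def boundedCombos (W : Finset ℤ) (n : ℕ) : Finset ℤ :=
  Finset.univ.image fun c : W → Fin n => ∑ w, (c w : ℤ) * w

lemma card_boundedCombos_le (W : Finset ℤ) (n : ℕ) : (boundedCombos W n).card ≤ n ^ W.card :=
  Finset.card_image_le.trans (by simp)

lemma sum_mem_boundedCombos {W : Finset ℤ} {n : ℕ} {l : List ℤ} (hl : ∀ x ∈ l, x ∈ W)
    (hlen : l.length < n) : l.sum ∈ boundedCombos W n := by
  refine Finset.mem_image.mpr
    ⟨fun w => ⟨l.count (w : ℤ), List.count_le_length.trans_lt hlen⟩,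
      Finset.mem_univ _, ?_⟩
  rw [Finset.sum_list_count, Finset.sum_coe_sort W fun w => (l.count w : ℤ) * w]
  refine (Finset.sum_subset (fun x hx => hl x (List.mem_toFinset.mp hx))
    fun x _ hx => ?_).symm.trans ?_
  · rw [List.count_eq_zero.mpr (mt List.mem_toFinset.mpr hx), Nat.cast_zero, zero_mul]
  · simp

def finLinE (W A : Finset ℤ) : Set (A × ℤ × A) :=
  {e | (e.1.1, e.2.1, e.2.2.1) ∈ LinE W A}

lemma satMP_finLinE (W A : Finset ℤ) : SatMP (finLinE W A) :=
  (satMP_linE W A.bddBelow A.bddAbove).of_isHom fun _ he => he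

lemma exists_isHom_finLinE_boundedCombos {W : Finset ℤ} {n : ℕ} (G : WGraph W)
    (hcard : Fintype.card G.V ≤ n) (hMP : SatMP G.E) :
    ∃ φ : G.V → boundedCombos W n, IsHom G.E (finLinE W (boundedCombos W n)) φ := by
  obtain ⟨φ, hφ⟩ := exists_isDistFrom G hMP
  have hmem : ∀ v, φ v ∈ boundedCombos W n := by
    intro v
    obtain ⟨p, hp, -, hpw, hlen⟩ := hφ.exists_short_path hMP v
    rw [← hpw]
    refine sum_mem_boundedCombos (fun x hx => ?_) (by simpa using hlen.trans_le hcard)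
    obtain ⟨e, he, rfl⟩ := List.mem_map.mp hx
    exact G.wt e (hp.1 e he)
  exact ⟨fun v => ⟨φ v, hmem v⟩, fun e he =>
    ⟨hmem _, hmem _, G.wt e he, sub_le_iff_le_add'.mpr (hφ.le_add he)⟩⟩

theorem universal_upper_bound_weights_general (n k : ℕ)
    (W : Finset ℤ) (hW : W.card = k) :
    ∃ (U : Type) (fU : Fintype U) (EU : Set (U × ℤ × U)),
      Universal n W EU ∧ @Fintype.card U fU ≤ n ^ k :=
  ⟨boundedCombos W n, inferInstance, finLinE W (boundedCombos W n),
    ⟨satMP_finLinE W _, fun G hcard hMP => exists_isHom_finLinE_boundedCombos G hcard hMP⟩,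
    by simpa [hW] using card_boundedCombos_le W n⟩

/-- for every finite set `W ⊆ ℤ` of `k ≥ 1` weights and every
`n ≥ 1`, there exists an `(n,W)`-universal graph of size at most `n^k`. -/
theorem universal_upper_bound_weights (n k : ℕ) (hn : 1 ≤ n) (hk : 1 ≤ k)
    (W : Finset ℤ) (hW : W.card = k) :
    ∃ (U : Type) (fU : Fintype U) (EU : Set (U × ℤ × U)),
      Universal n W EU ∧ @Fintype.card U fU ≤ n ^ k :=
  universal_upper_bound_weights_general n k W hW
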